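/- For each subset γ of A, e_γ ℂStyl(A) e_γ = ℂ e_γ; consequently each e_γ is a primitive idempotent of ℂStyl(A). -/

import Mathlib

noncomputable section

open FreeMonoid

/-- The defining relations of the stylic congruence: the Knuth (plactic)
relations together with the idempotent relations `a² ≡ a`. -/
inductive StylicRel (A : Type*) [LinearOrder A] : FreeMonoid A → FreeMonoid A → Prop
  | knuth1 {a b c : A} : a < b → b < c →
      StylicRel A (ofList [b, a, c]) (ofList [b, c, a])
  | knuth2 {a b c : A} : a < b → b < c →
      StylicRel A (ofList [a, c, b]) (ofList [c, a, b])
  | knuth3 {a b : A} : a < b →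
      StylicRel A (ofList [b, a, b]) (ofList [b, b, a])
  | knuth4 {a b : A} : a < b →
      StylicRel A (ofList [a, b, a]) (ofList [b, a, a])
  | idem (a : A) : StylicRel A (ofList [a, a]) (ofList [a])

/-- The stylic congruence on the free monoid `A*`. -/
def stylCon (A : Type*) [LinearOrder A] : Con (FreeMonoid A) := conGen (StylicRel A)

/-- The stylic monoid `Styl(A)`. -/
abbrev Styl (A : Type*) [LinearOrder A] := (stylCon A).Quotient

/-- The image of a letter `a` in the complex stylic algebra `ℂStyl(A)`. -/
def styGenC {A : Type*} [LinearOrder A] (a : A) : MonoidAlgebra ℂ (Styl A) :=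
  MonoidAlgebra.of ℂ (Styl A) ((stylCon A).mk' (FreeMonoid.of a))

/-- The idempotent `e_γ` of `ℂStyl(A)` associated with a subset `γ ⊆ A`. -/
def eIdemC {A : Type*} [LinearOrder A] [Fintype A] (γ : Finset A) :
    MonoidAlgebra ℂ (Styl A) :=
  (((γᶜ).sort (· ≤ ·)).map (fun a => 1 - styGenC a)).prod *
    ((γ.sort (· ≤ ·)).reverse.map styGenC).prod

/-!
Write `e_γ = N P` with `N = ∏_{a ∉ γ, ↗} (1 - a)` and `P = ∏_{a ∈ γ, ↘} a`, and let `χ_γ` be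
the character of `ℂStyl(A)` sending a letter `a` to `1` if `a ∈ γ` and to `0` otherwise; it
exists because the stylic relations hold in every commutative monoid of idempotents. The heart
of the proof is the identity `N w P = χ_γ(w) N P` for every word `w`, proved by peeling off the
smallest letter `m`. In the stylic monoid `m m = m` and `m c m = c m` for `m < c`, so `m` is
absorbed from the left by any word in letters `≥ m` that contains it. If `m ∈ γ`, then `P` ends
with `m`, which swallows the occurrences of `m` in `w`; if `m ∉ γ` and `m` occurs in `w`, then
`m` fixes `N' w P` on the left and the factor `1 - m` of `N = (1 - m) N'` kills it. Hence
`e_γ x e_γ = N (P x N) P = χ_γ(x) e_γ`, and `χ_γ(e_γ) = 1` shows that `e_γ ≠ 0`.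
-/

theorem Finset.sort_eq_filter_sort {α : Type*} [LinearOrder α] {s t : Finset α} (h : s ⊆ t) :
    s.sort = t.sort.filter (· ∈ s) :=
  List.Pairwise.eq_of_mem_iff (Finset.sortedLT_sort s).pairwise
    ((Finset.sortedLT_sort t).pairwise.filter _) fun a => by
      simpa using fun ha => h ha

theorem IsIdempotentElem.smul_eq_zero_or_eq {K R : Type*} [Field K] [Ring R] [Algebra K R]
    {e : R} (he : IsIdempotentElem e) (he0 : e ≠ 0) {z : K} (hz : IsIdempotentElem (z • e)) :
    z • e = 0 ∨ z • e = e := by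
  have hzz : IsIdempotentElem z := smul_left_injective K he0 <| by
    simpa only [IsIdempotentElem, smul_mul_smul_comm, he.eq] using hz.eq
  rcases IsIdempotentElem.iff_eq_zero_or_one.mp hzz with rfl | rfl
  · exact .inl (zero_smul K e)
  · exact .inr (one_smul K e)

section Stylic

variable {A : Type*} [LinearOrder A]

def stylWord (w : List A) : MonoidAlgebra ℂ (Styl A) := (w.map styGenC).prod

@[simp] theorem stylWord_nil : stylWord ([] : List A) = 1 := rfl

@[simp] theorem stylWord_cons (a : A) (w : List A) :
    stylWord (a :: w) = styGenC a * stylWord w := List.prod_cons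

@[simp] theorem stylWord_append (u v : List A) :
    stylWord (u ++ v) = stylWord u * stylWord v := by
  simp [stylWord]

theorem stylWord_eq_of_mk' (w : List A) :
    stylWord w = MonoidAlgebra.of ℂ (Styl A) ((stylCon A).mk' (ofList w)) := by
  induction w with
  | nil => simp [MonoidAlgebra.one_def]
  | cons a w ih => rw [stylWord_cons, ih, ofList_cons, map_mul, map_mul]; rfl

theorem stylWord_eq_of_stylicRel {u v : List A} (h : StylicRel A (ofList u) (ofList v)) :
    stylWord u = stylWord v := by
  rw [stylWord_eq_of_mk', stylWord_eq_of_mk']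
  exact congrArg _ ((Con.eq _).mpr (ConGen.Rel.of _ _ h))

theorem styGenC_mul_self (a : A) : styGenC a * styGenC a = styGenC a := by
  simpa using stylWord_eq_of_stylicRel (StylicRel.idem a)

theorem styGenC_mul_styGenC_mul_styGenC_of_lt {m c : A} (h : m < c) :
    styGenC m * (styGenC c * styGenC m) = styGenC c * styGenC m := by
  have := stylWord_eq_of_stylicRel (StylicRel.knuth4 h)
  simp only [stylWord_cons, stylWord_nil, mul_one] at this
  rw [this, ← mul_assoc, mul_assoc, styGenC_mul_self]

theorem styGenC_mul_stylWord_mul_styGenC {m : A} {t : List A} (ht : ∀ c ∈ t, m ≤ c) :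
    styGenC m * (stylWord t * styGenC m) = stylWord t * styGenC m := by
  induction t with
  | nil => simp [styGenC_mul_self]
  | cons c t ih =>
    have ih := ih fun x hx => ht x (List.mem_cons_of_mem c hx)
    simp only [stylWord_cons, mul_assoc]
    rcases (ht c List.mem_cons_self).eq_or_lt with rfl | hlt
    · rw [← mul_assoc, styGenC_mul_self]
    · rw [← ih, ← mul_assoc (styGenC c), ← mul_assoc (styGenC m),
        styGenC_mul_styGenC_mul_styGenC_of_lt hlt]

theorem styGenC_mul_stylWord_of_mem {m : A} {y : List A} (hm : m ∈ y) (hy : ∀ c ∈ y, m ≤ c) :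
    styGenC m * stylWord y = stylWord y := by
  obtain ⟨u, t, rfl⟩ := List.append_of_mem hm
  have hu := styGenC_mul_stylWord_mul_styGenC (t := u) fun c hc => hy c (by simp [hc])
  simp only [stylWord_append, stylWord_cons, ← mul_assoc] at hu ⊢
  rw [hu]

theorem stylWord_mul_stylWord_eq_filter {m : A} {w p : List A} (hw : ∀ c ∈ w, m ≤ c)
    (hm : m ∈ p) (hp : ∀ c ∈ p, m ≤ c) :
    stylWord w * stylWord p = stylWord (w.filter (· ≠ m)) * stylWord p := by
  induction w with
  | nil => rfl
  | cons c w ih =>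
    have ih := ih fun x hx => hw x (List.mem_cons_of_mem c hx)
    by_cases hc : c = m
    · subst hc
      have hwp : ∀ x ∈ w ++ p, c ≤ x := by
        simpa [or_imp, forall_and] using ⟨fun x hx => hw x (.tail c hx), hp⟩
      rw [List.filter_cons_of_neg (by simp), ← ih, stylWord_cons, mul_assoc, ← stylWord_append,
        styGenC_mul_stylWord_of_mem (by simp [hm]) hwp, stylWord_append]
    · rw [List.filter_cons_of_pos (by simpa using hc), stylWord_cons, stylWord_cons, mul_assoc,
        mul_assoc, ih]

theorem styGenC_mul_stylWord_mul_one_sub_mul {m c : A} (hc : m ≤ c)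
    {x : MonoidAlgebra ℂ (Styl A)}
    (hx : ∀ u : List A, (∀ a ∈ u, m ≤ a) → styGenC m * (stylWord u * x) = stylWord u * x)
    {u : List A} (hu : ∀ a ∈ u, m ≤ a) :
    styGenC m * (stylWord u * ((1 - styGenC c) * x)) = stylWord u * ((1 - styGenC c) * x) := by
  have hsplit : ∀ v : List A,
      stylWord v * ((1 - styGenC c) * x) = stylWord v * x - stylWord (v ++ [c]) * x := by
    intro v
    simp [mul_sub, sub_mul, mul_assoc]
  rw [hsplit, mul_sub, hx u hu, hx (u ++ [c]) (by simpa [or_imp, forall_and] using ⟨hu, hc⟩)]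

theorem styGenC_mul_prod_one_sub_mul_stylWord {m : A} {l y : List A} (hl : ∀ c ∈ l, m ≤ c)
    (hm : m ∈ y) (hy : ∀ c ∈ y, m ≤ c) :
    styGenC m * ((l.map (1 - styGenC ·)).prod * stylWord y) =
      (l.map (1 - styGenC ·)).prod * stylWord y := by
  -- Expanding a factor `1 - c` moves the letter `c` into the prefix `u`.
  suffices ∀ u : List A, (∀ a ∈ u, m ≤ a) →
      styGenC m * (stylWord u * ((l.map (1 - styGenC ·)).prod * stylWord y)) =
        stylWord u * ((l.map (1 - styGenC ·)).prod * stylWord y) by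
    simpa using this [] (by simp)
  induction l with
  | nil =>
    intro u hu
    have huy : ∀ c ∈ u ++ y, m ≤ c := by simpa [or_imp, forall_and] using ⟨hu, hy⟩
    simpa using styGenC_mul_stylWord_of_mem (by simp [hm]) huy
  | cons c l ih =>
    intro u hu
    simpa only [List.map_cons, List.prod_cons, mul_assoc] using
      styGenC_mul_stylWord_mul_one_sub_mul (hl c List.mem_cons_self)
        (ih fun a ha => hl a (List.mem_cons_of_mem c ha)) hu

def stylLift {M : Type*} [CommMonoid M] (f : A → M) (hf : ∀ a, IsIdempotentElem (f a)) :
    Styl A →* M :=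
  (stylCon A).lift (FreeMonoid.lift f) <|
    show stylCon A ≤ _ from Con.conGen_le.mpr fun u v h => by
      rw [Con.ker_rel]
      cases h <;> simp only [FreeMonoid.lift_ofList, List.map_cons, List.map_nil, List.prod_cons,
        List.prod_nil, mul_one] <;> grind [IsIdempotentElem]

-- The character `χ_γ` of the header.
def stylChar (γ : Finset A) : MonoidAlgebra ℂ (Styl A) →ₐ[ℂ] ℂ :=
  MonoidAlgebra.lift ℂ ℂ (Styl A) <| stylLift (fun a => if a ∈ γ then 1 else 0) fun a => by
    split_ifs <;> simp [IsIdempotentElem]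

theorem stylChar_styGenC (γ : Finset A) (a : A) :
    stylChar γ (styGenC a) = if a ∈ γ then 1 else 0 := by
  rw [stylChar, styGenC, MonoidAlgebra.lift_of, stylLift, Con.lift_mk', FreeMonoid.lift_eval_of]

theorem stylChar_stylWord_of_subset {γ : Finset A} {w : List A} (h : ∀ c ∈ w, c ∈ γ) :
    stylChar γ (stylWord w) = 1 := by
  rw [stylWord, map_list_prod, List.map_map]
  exact List.prod_eq_one fun x hx => by
    obtain ⟨c, hc, rfl⟩ := List.mem_map.mp hx
    simp [stylChar_styGenC, h c hc]

theorem stylChar_stylWord_of_mem {γ : Finset A} {w : List A} {m : A} (hm : m ∈ w)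
    (hmγ : m ∉ γ) :
    stylChar γ (stylWord w) = 0 := by
  rw [stylWord, map_list_prod, List.map_map]
  exact List.prod_eq_zero (List.mem_map.mpr ⟨m, hm, by simp [stylChar_styGenC, hmγ]⟩)

variable (γ : Finset A)

-- `N` and `P` of the header, for the alphabet listed as `L`.
def idemLeftFactor (L : List A) : MonoidAlgebra ℂ (Styl A) :=
  ((L.filter (· ∉ γ)).map (1 - styGenC ·)).prod

def idemRightFactor (L : List A) : MonoidAlgebra ℂ (Styl A) :=
  stylWord (L.filter (· ∈ γ)).reverse

variable {γ}

theorem stylChar_idemLeftFactor (L : List A) : stylChar γ (idemLeftFactor γ L) = 1 := by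
  rw [idemLeftFactor, map_list_prod, List.map_map]
  exact List.prod_eq_one fun x hx => by
    obtain ⟨c, hc, rfl⟩ := List.mem_map.mp hx
    simp_all [stylChar_styGenC]

theorem stylChar_idemRightFactor (L : List A) : stylChar γ (idemRightFactor γ L) = 1 :=
  stylChar_stylWord_of_subset fun c hc => by simp_all

theorem idemLeftFactor_cons_of_mem {m : A} (hm : m ∈ γ) (L : List A) :
    idemLeftFactor γ (m :: L) = idemLeftFactor γ L := by
  simp [idemLeftFactor, hm]

theorem idemLeftFactor_cons_of_notMem {m : A} (hm : m ∉ γ) (L : List A) :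
    idemLeftFactor γ (m :: L) = (1 - styGenC m) * idemLeftFactor γ L := by
  simp [idemLeftFactor, hm]

theorem idemRightFactor_cons_of_mem {m : A} (hm : m ∈ γ) (L : List A) :
    idemRightFactor γ (m :: L) = idemRightFactor γ L * styGenC m := by
  simp [idemRightFactor, hm]

theorem idemRightFactor_cons_of_notMem {m : A} (hm : m ∉ γ) (L : List A) :
    idemRightFactor γ (m :: L) = idemRightFactor γ L := by
  simp [idemRightFactor, hm]

theorem stylWord_mul_idemRightFactor_eq_filter {m : A} (hm : m ∈ γ) {L w : List A}
    (hL : ∀ c ∈ L, m ≤ c) (hw : ∀ c ∈ w, m ≤ c) :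
    stylWord w * idemRightFactor γ (m :: L) =
      stylWord (w.filter (· ≠ m)) * idemRightFactor γ (m :: L) := by
  refine stylWord_mul_stylWord_eq_filter hw (by simp [hm]) fun c hc => ?_
  obtain rfl | hc := List.mem_cons.mp (List.mem_filter.mp (List.mem_reverse.mp hc)).1
  exacts [le_rfl, hL c hc]

theorem styGenC_mul_idemLeftFactor_mul_stylWord_mul_idemRightFactor {m : A} {L w : List A}
    (hL : ∀ c ∈ L, m ≤ c) (hmw : m ∈ w) (hw : ∀ c ∈ w, m ≤ c) :
    styGenC m * (idemLeftFactor γ L * (stylWord w * idemRightFactor γ L)) =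
      idemLeftFactor γ L * (stylWord w * idemRightFactor γ L) := by
  rw [idemRightFactor, ← stylWord_append]
  refine styGenC_mul_prod_one_sub_mul_stylWord (fun c hc => hL c (List.mem_filter.mp hc).1)
    (by simp [hmw]) fun c hc => ?_
  obtain hc | hc := List.mem_append.mp hc
  exacts [hw c hc, hL c (List.mem_filter.mp (List.mem_reverse.mp hc)).1]

theorem idemLeftFactor_mul_stylWord_mul_idemRightFactor {L : List A} (hL : L.Pairwise (· < ·))
    {w : List A} (hw : ∀ c ∈ w, c ∈ L) :
    idemLeftFactor γ L * stylWord w * idemRightFactor γ L =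
      stylChar γ (stylWord w) • (idemLeftFactor γ L * idemRightFactor γ L) := by
  induction L generalizing w with
  | nil =>
    obtain rfl : w = [] := List.eq_nil_iff_forall_not_mem.mpr fun c hc => by simpa using hw c hc
    simp [idemLeftFactor, idemRightFactor]
  | cons m L ih =>
    obtain ⟨hmL, hL⟩ := List.pairwise_cons.mp hL
    have hLm : ∀ c ∈ L, m ≤ c := fun c hc => (hmL c hc).le
    have hwm : ∀ c ∈ w, m ≤ c := fun c hc =>
      (List.mem_cons.mp (hw c hc)).elim ge_of_eq (hLm c)
    by_cases hmγ : m ∈ γ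
    · have hw' : ∀ c ∈ w.filter (· ≠ m), c ∈ L := fun c hc => by
        obtain ⟨hcw, hcm⟩ := List.mem_filter.mp hc
        exact (List.mem_cons.mp (hw c hcw)).resolve_left (by simpa using hcm)
      have hdrop := stylWord_mul_idemRightFactor_eq_filter hmγ hLm hwm
      have hchar : stylChar γ (stylWord w) = stylChar γ (stylWord (w.filter (· ≠ m))) := by
        simpa [stylChar_idemRightFactor] using congrArg (stylChar γ) hdrop
      rw [mul_assoc, hdrop, ← mul_assoc, hchar, idemLeftFactor_cons_of_mem hmγ,
        idemRightFactor_cons_of_mem hmγ, ← mul_assoc, ih hL hw', smul_mul_assoc, mul_assoc]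
    · rw [idemLeftFactor_cons_of_notMem hmγ, idemRightFactor_cons_of_notMem hmγ]
      by_cases hmw : m ∈ w
      · rw [stylChar_stylWord_of_mem hmw hmγ, zero_smul, mul_assoc, mul_assoc, sub_mul, one_mul,
          styGenC_mul_idemLeftFactor_mul_stylWord_mul_idemRightFactor hLm hmw hwm, sub_self]
      · have hwL : ∀ c ∈ w, c ∈ L := fun c hc =>
          (List.mem_cons.mp (hw c hc)).resolve_left fun h => hmw (h ▸ hc)
        rw [mul_assoc, mul_assoc, ← mul_assoc _ (stylWord w), ih hL hwL, mul_smul_comm,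
          mul_assoc]

variable [Fintype A] (γ)

theorem eIdemC_eq_idemLeftFactor_mul_idemRightFactor :
    eIdemC γ = idemLeftFactor γ Finset.univ.sort * idemRightFactor γ Finset.univ.sort := by
  rw [eIdemC, idemLeftFactor, idemRightFactor, stylWord,
    Finset.sort_eq_filter_sort (Finset.subset_univ γ),
    Finset.sort_eq_filter_sort (Finset.subset_univ γᶜ)]
  simp only [Finset.mem_compl]

theorem idemLeftFactor_mul_mul_idemRightFactor (x : MonoidAlgebra ℂ (Styl A)) :
    idemLeftFactor γ Finset.univ.sort * x * idemRightFactor γ Finset.univ.sort =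
      stylChar γ x •
        (idemLeftFactor γ Finset.univ.sort * idemRightFactor γ Finset.univ.sort) := by
  induction x using MonoidAlgebra.induction_on with
  | of s =>
    obtain ⟨u, rfl⟩ := Con.mk'_surjective s
    rw [← ofList_toList u, ← stylWord_eq_of_mk']
    exact idemLeftFactor_mul_stylWord_mul_idemRightFactor (Finset.sortedLT_sort _).pairwise
      (by simp)
  | add x y hx hy => rw [mul_add, add_mul, hx, hy, map_add, add_smul]
  | smul r x hx => rw [mul_smul_comm, smul_mul_assoc, hx, map_smul, smul_assoc]

theorem eIdemC_mul_mul_eIdemC (x : MonoidAlgebra ℂ (Styl A)) :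
    eIdemC γ * x * eIdemC γ = stylChar γ x • eIdemC γ := by
  set N := idemLeftFactor γ Finset.univ.sort
  set P := idemRightFactor γ Finset.univ.sort
  calc eIdemC γ * x * eIdemC γ = N * (P * x * N) * P := by
        simp only [eIdemC_eq_idemLeftFactor_mul_idemRightFactor, N, P, mul_assoc]
    _ = stylChar γ x • eIdemC γ := by
        rw [idemLeftFactor_mul_mul_idemRightFactor, map_mul, map_mul, stylChar_idemLeftFactor,
          stylChar_idemRightFactor, one_mul, mul_one, eIdemC_eq_idemLeftFactor_mul_idemRightFactor]

theorem stylChar_eIdemC : stylChar γ (eIdemC γ) = 1 := by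
  rw [eIdemC_eq_idemLeftFactor_mul_idemRightFactor, map_mul, stylChar_idemLeftFactor,
    stylChar_idemRightFactor, one_mul]

end Stylic

/-- Theorem `system`, part 3: `e_γ ℂStyl(A) e_γ = ℂ e_γ`;
consequently `e_γ` is a primitive idempotent of `ℂStyl(A)`: it is nonzero and
the only idempotents of `e_γ ℂStyl(A) e_γ` are `0` and `e_γ`. -/
theorem eIdemC_primitive {A : Type*} [LinearOrder A] [Fintype A]
    (γ : Finset A) :
    (∀ x : MonoidAlgebra ℂ (Styl A), ∃ z : ℂ,
        eIdemC γ * x * eIdemC γ = z • eIdemC γ) ∧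
    eIdemC γ ≠ 0 ∧
    (∀ f : MonoidAlgebra ℂ (Styl A), IsIdempotentElem f →
        (∃ x, f = eIdemC γ * x * eIdemC γ) → f = 0 ∨ f = eIdemC γ) := by
  have he0 : eIdemC γ ≠ 0 := fun h => by simpa [h] using stylChar_eIdemC γ
  have he : IsIdempotentElem (eIdemC γ) := by
    simpa [IsIdempotentElem] using eIdemC_mul_mul_eIdemC γ 1
  refine ⟨fun x => ⟨_, eIdemC_mul_mul_eIdemC γ x⟩, he0, ?_⟩
  rintro f hf ⟨x, rfl⟩
  rw [eIdemC_mul_mul_eIdemC] at hf ⊢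
  exact he.smul_eq_zero_or_eq he0 hf
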